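/- Fix a̲ ∈ (0, π) and let t' ∈ ℝ and s ∈ ℝ satisfy t' ≤ s < t' + 2. Then there exists a constant C̄₀, depending only on λ̲, s − t' and a̲, such that for every r ≥ 1, every S̄_r as in the context, and every v ∈ H^{t'}, ‖B^{−1}v − S̄_r(B)v‖_s ≤ C̄₀ · e^{−(2−(s−t'))·a̲·√r/2} · ‖v‖_{t'}. -/

import Mathlib

/-! On `[λ̲, X)`, `X = e^{π√r}/8`, the error `x⁻¹ - S̄_r(x)` is at most `(16/λ̲ + 8re) e^{-π√r}`;
beyond `X` it lies in `[0, x⁻¹]` because `S̄_r ≥ 0`. The weight `x^{(s-t')/2}` costs at most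
`e^{π√r (s-t')/2}` in the first regime and leaves at most `8 X^{(s-t')/2-1}` in the second, so in
both the weighted error is `O(r e^{-(1-(s-t')/2)π√r})`; lowering `π` to `a̲ < π` absorbs the factor
`r`. A diagonal multiplier with `λ_ν^{(s-t')/2} |m_ν| ≤ c` maps `H^{t'}` to `H^s` with norm at
most `c`. -/

open scoped ENNReal
open Filter

/-- `λ_ν = λ_{1,ν_1} + ⋯ + λ_{d,ν_d}` (indices `0`-based in Lean, `1`-based in the paper). -/
noncomputable def lamNu (d : ℕ) (lam : Fin d → ℕ → ℝ) (ν : Fin d → ℕ) : ℝ :=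
  ∑ j, lam j (ν j)

/-- The `H^s` norm `(Σ_ν λ_ν^s v_ν²)^{1/2}`, as an extended nonnegative real. -/
noncomputable def hnorm (d : ℕ) (lam : Fin d → ℕ → ℝ) (s : ℝ) (v : (Fin d → ℕ) → ℝ) : ℝ≥0∞ :=
  (∑' ν : Fin d → ℕ, ENNReal.ofReal (lamNu d lam ν ^ s * v ν ^ 2)) ^ (1 / 2 : ℝ)

def MemH (d : ℕ) (lam : Fin d → ℕ → ℝ) (s : ℝ) (v : (Fin d → ℕ) → ℝ) : Prop :=
  hnorm d lam s v < ⊤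

/-- `λ̲ = λ_{(1,…,1)}`, the smallest of the `λ_ν`. -/
noncomputable def lamMin (d : ℕ) (lam : Fin d → ℕ → ℝ) : ℝ := lamNu d lam (fun _ => 0)

def IsRankOne (d : ℕ) (τ : (Fin d → ℕ) → ℝ) : Prop :=
  ∃ c : Fin d → ℕ → ℝ, ∀ ν, τ ν = ∏ j, c j (ν j)

open Real

lemma lamNu_pos {d : ℕ} (hd : 0 < d) {lam : Fin d → ℕ → ℝ} (hpos : ∀ j n, 0 < lam j n)
    (ν : Fin d → ℕ) : 0 < lamNu d lam ν :=
  Finset.sum_pos (fun j _ => hpos j _) (Finset.univ_nonempty_iff.2 (Fin.pos_iff_nonempty.1 hd))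

lemma lamMin_le_lamNu {d : ℕ} {lam : Fin d → ℕ → ℝ} (hmono : ∀ j, Monotone (lam j))
    (ν : Fin d → ℕ) : lamMin d lam ≤ lamNu d lam ν := by
  unfold lamMin lamNu
  exact Finset.sum_le_sum fun j _ => hmono j (Nat.zero_le _)

lemma hnorm_mul_le {d : ℕ} {lam : Fin d → ℕ → ℝ} {s t c : ℝ} {m : (Fin d → ℕ) → ℝ}
    (hc : 0 ≤ c) (hm : ∀ ν, lamNu d lam ν ^ s * m ν ^ 2 ≤ c ^ 2 * lamNu d lam ν ^ t)
    (v : (Fin d → ℕ) → ℝ) :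
    hnorm d lam s (fun ν => m ν * v ν) ≤ ENNReal.ofReal c * hnorm d lam t v := by
  have hterm : ∀ ν, ENNReal.ofReal (lamNu d lam ν ^ s * (m ν * v ν) ^ 2)
      ≤ ENNReal.ofReal (c ^ 2) * ENNReal.ofReal (lamNu d lam ν ^ t * v ν ^ 2) := by
    intro ν
    rw [← ENNReal.ofReal_mul (sq_nonneg c)]
    apply ENNReal.ofReal_le_ofReal
    calc lamNu d lam ν ^ s * (m ν * v ν) ^ 2 = lamNu d lam ν ^ s * m ν ^ 2 * v ν ^ 2 := by ring
      _ ≤ c ^ 2 * lamNu d lam ν ^ t * v ν ^ 2 := mul_le_mul_of_nonneg_right (hm ν) (sq_nonneg _)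
      _ = c ^ 2 * (lamNu d lam ν ^ t * v ν ^ 2) := by ring
  calc hnorm d lam s (fun ν => m ν * v ν)
      ≤ (ENNReal.ofReal (c ^ 2) *
          ∑' ν, ENNReal.ofReal (lamNu d lam ν ^ t * v ν ^ 2)) ^ (1 / 2 : ℝ) := by
        rw [← ENNReal.tsum_mul_left]
        exact ENNReal.rpow_le_rpow (ENNReal.tsum_le_tsum hterm) (by norm_num)
    _ = ENNReal.ofReal c * hnorm d lam t v := by
        rw [ENNReal.mul_rpow_of_nonneg _ _ (by norm_num), ENNReal.ofReal_pow hc,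
          ← ENNReal.rpow_natCast, ← ENNReal.rpow_mul]
        norm_num [hnorm]

lemma rpow_mul_sq_le_of_rpow_half_mul_abs_le {L s t m c : ℝ} (hL : 0 < L)
    (h : L ^ ((s - t) / 2) * |m| ≤ c) : L ^ s * m ^ 2 ≤ c ^ 2 * L ^ t := by
  have hsplit : L ^ s = (L ^ ((s - t) / 2)) ^ 2 * L ^ t := by
    rw [← rpow_natCast, ← rpow_mul hL.le, ← rpow_add hL]
    congr 1
    push_cast
    ring
  calc L ^ s * m ^ 2 = (L ^ ((s - t) / 2) * |m|) ^ 2 * L ^ t := by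
        rw [hsplit, mul_pow, sq_abs]; ring
    _ ≤ c ^ 2 * L ^ t := by gcongr

lemma mul_exp_neg_mul_sqrt_le {a b ρ : ℝ} (hab : a < b) (hρ : 0 ≤ ρ) :
    ρ * exp (-(b * √ρ)) ≤ 2 / (b - a) ^ 2 * exp (-(a * √ρ)) := by
  have hε : 0 < b - a := sub_pos.2 hab
  -- the quadratic term of the Taylor series of `exp ((b - a) √ρ)`
  have htaylor := pow_div_factorial_le_exp _ (mul_nonneg hε.le (sqrt_nonneg ρ)) 2
  have hρ_le : ρ ≤ 2 / (b - a) ^ 2 * exp ((b - a) * √ρ) := by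
    rw [mul_pow, sq_sqrt hρ, Nat.factorial_two, Nat.cast_ofNat] at htaylor
    rw [div_mul_eq_mul_div, le_div_iff₀ (by positivity)]
    linarith
  calc ρ * exp (-(b * √ρ)) ≤ 2 / (b - a) ^ 2 * exp ((b - a) * √ρ) * exp (-(b * √ρ)) := by
        gcongr
    _ = 2 / (b - a) ^ 2 * exp (-(a * √ρ)) := by
        rw [mul_assoc, ← exp_add]
        ring_nf

lemma rpow_mul_abs_one_div_sub_le {x y p K Y : ℝ} (hx : 0 < x) (hp0 : 0 ≤ p) (hp1 : p ≤ 1)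
    (hy : 0 ≤ y) (happrox : |1 / x - y| ≤ K * exp (-Y)) (htail : exp Y / 8 ≤ x → y ≤ 1 / x) :
    x ^ p * |1 / x - y| ≤ (K + 8) * exp (-((1 - p) * Y)) := by
  have hK : 0 ≤ K := nonneg_of_mul_nonneg_left ((abs_nonneg _).trans happrox) (exp_pos _)
  rcases le_or_gt x (exp Y / 8) with hnear | hfar
  · have hxp : x ^ p ≤ exp (Y * p) := by
      rw [exp_mul]
      exact rpow_le_rpow hx.le (by linarith [exp_pos Y]) hp0
    calc x ^ p * |1 / x - y| ≤ exp (Y * p) * (K * exp (-Y)) := by gcongr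
      _ = K * exp (-((1 - p) * Y)) := by rw [mul_left_comm, ← exp_add]; ring_nf
      _ ≤ (K + 8) * exp (-((1 - p) * Y)) := by gcongr; linarith
  · have hX : 0 < exp Y / 8 := by positivity
    have h8 : 1 / 8 ≤ (8 : ℝ) ^ (p - 1) := by
      calc (1 / 8 : ℝ) = 8 ^ (-1 : ℝ) := by norm_num [rpow_neg_one]
        _ ≤ 8 ^ (p - 1) := rpow_le_rpow_of_exponent_le (by norm_num) (by linarith)
    calc x ^ p * |1 / x - y| ≤ x ^ p * (1 / x) := by
          rw [abs_of_nonneg (sub_nonneg.2 (htail hfar.le))]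
          gcongr
          linarith
      _ = x ^ (p - 1) := by rw [rpow_sub hx, rpow_one, mul_one_div]
      _ ≤ (exp Y / 8) ^ (p - 1) := rpow_le_rpow_of_nonpos hX hfar.le (by linarith)
      _ = exp (-((1 - p) * Y)) / 8 ^ (p - 1) := by
          rw [div_rpow (exp_pos Y).le (by norm_num), ← exp_mul]
          ring_nf
      _ ≤ exp (-((1 - p) * Y)) / (1 / 8) := by gcongr
      _ ≤ (K + 8) * exp (-((1 - p) * Y)) := by
          rw [one_div, div_inv_eq_mul, mul_comm]
          gcongr
          linarith

lemma rpow_mul_abs_one_div_sub_le_exp_neg {lm p a ρ x y : ℝ} (hlm : 0 < lm) (hp0 : 0 ≤ p)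
    (hp1 : p < 1) (ha : a < π) (hρ : 1 ≤ ρ) (hy : 0 ≤ y) (hx : lm ≤ x)
    (happrox : |1 / x - y| ≤ (16 / lm + 8 * ρ * exp 1) * exp (-π * √ρ))
    (htail : 1 / 8 * exp (π * √ρ) ≤ x → y ≤ 1 / x) :
    x ^ p * |1 / x - y| ≤
      (16 / lm + 8 * exp 1 + 8) * (2 / ((1 - p) * (π - a)) ^ 2) * exp (-((1 - p) * a * √ρ)) := by
  have hb : (1 - p) * a < (1 - p) * π := mul_lt_mul_of_pos_left ha (by linarith)
  calc x ^ p * |1 / x - y|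
      ≤ (16 / lm + 8 * ρ * exp 1 + 8) * exp (-((1 - p) * (π * √ρ))) := by
        refine rpow_mul_abs_one_div_sub_le (hlm.trans_le hx) hp0 hp1.le hy ?_ ?_
        · rwa [neg_mul] at happrox
        · rwa [← one_div_mul_eq_div]
    _ ≤ (16 / lm + 8 * exp 1 + 8) * ρ * exp (-((1 - p) * π * √ρ)) := by
        rw [← mul_assoc (1 - p)]
        gcongr
        nlinarith [mul_nonneg (by positivity : (0 : ℝ) ≤ 16 / lm + 8) (sub_nonneg.2 hρ)]
    _ ≤ (16 / lm + 8 * exp 1 + 8) *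
          (2 / ((1 - p) * π - (1 - p) * a) ^ 2 * exp (-((1 - p) * a * √ρ))) := by
        rw [mul_assoc]
        exact mul_le_mul_of_nonneg_left (mul_exp_neg_mul_sqrt_le hb (zero_le_one.trans hρ))
          (by positivity)
    _ = (16 / lm + 8 * exp 1 + 8) * (2 / ((1 - p) * (π - a)) ^ 2) *
          exp (-((1 - p) * a * √ρ)) := by
        rw [← mul_sub]
        ring

theorem thresholded_approximate_inverse_error_general
    (d : ℕ) (hd : 0 < d) (lam : Fin d → ℕ → ℝ)
    (hpos : ∀ j n, 0 < lam j n) (hmono : ∀ j, Monotone (lam j))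
    (aLow : ℝ) (haLow : aLow < Real.pi)
    (t' s : ℝ) (hts : t' ≤ s) (hst : s < t' + 2) :
    ∃ C : ℝ, 0 < C ∧
      ∀ r : ℕ, 1 ≤ r → ∀ ω a : Fin r → ℝ,
        (∀ k, 0 ≤ ω k) → (∀ k, 0 < a k) →
        (∀ k, 0 < ω k → 8 * Real.exp (-Real.pi * Real.sqrt r) ≤ a k) →
        (∀ x : ℝ, lamMin d lam ≤ x →
          |1 / x - ∑ k, ω k * Real.exp (-(a k) * x)|
            ≤ (16 / lamMin d lam + 8 * r * Real.exp 1) * Real.exp (-Real.pi * Real.sqrt r)) →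
        (∀ x : ℝ, (1 / 8) * Real.exp (Real.pi * Real.sqrt r) ≤ x →
          ∑ k, ω k * Real.exp (-(a k) * x) ≤ 1 / x) →
        ∀ v : (Fin d → ℕ) → ℝ,
          hnorm d lam s (fun ν =>
              v ν / lamNu d lam ν - (∑ k, ω k * Real.exp (-(a k) * lamNu d lam ν)) * v ν)
            ≤ ENNReal.ofReal (C * Real.exp (-(2 - (s - t')) * aLow * Real.sqrt r / 2)) *
                hnorm d lam t' v := by
  have hlm : 0 < lamMin d lam := lamNu_pos hd hpos _
  have hgap : 0 < (1 - (s - t') / 2) * (π - aLow) :=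
    mul_pos (by linarith) (sub_pos.2 haLow)
  refine ⟨(16 / lamMin d lam + 8 * exp 1 + 8) * (2 / ((1 - (s - t') / 2) * (π - aLow)) ^ 2),
    by positivity, ?_⟩
  intro r hr ω a hω _ _ happrox htail v
  have hS : ∀ x, 0 ≤ ∑ k, ω k * exp (-(a k) * x) := fun x =>
    Finset.sum_nonneg fun k _ => mul_nonneg (hω k) (exp_pos _).le
  have hmul : (fun ν => v ν / lamNu d lam ν - (∑ k, ω k * exp (-(a k) * lamNu d lam ν)) * v ν)
      = fun ν => (1 / lamNu d lam ν - ∑ k, ω k * exp (-(a k) * lamNu d lam ν)) * v ν := by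
    funext ν
    ring
  have hexp : -(2 - (s - t')) * aLow * √r / 2 = -((1 - (s - t') / 2) * aLow * √r) := by ring
  rw [hmul, hexp]
  refine hnorm_mul_le (by positivity)
    (fun ν => rpow_mul_sq_le_of_rpow_half_mul_abs_le (lamNu_pos hd hpos ν) ?_) v
  have hν := lamMin_le_lamNu hmono ν
  exact rpow_mul_abs_one_div_sub_le_exp_neg hlm (by linarith) (by linarith) haLow
    (by exact_mod_cast hr) (hS _) hν (happrox _ hν) (htail _)

/-- Proposition 6.1 of the paper: error bound for the thresholded
approximate inverse `S̄_r(B)`.  For fixed `a̲ ∈ (0,π)` and `t' ≤ s < t' + 2` there is a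
constant `C̄₀`, depending only on `λ̲`, `s − t'` and `a̲`, such that for every `r ≥ 1`,
every admissible `S̄_r` and every `v ∈ H^{t'}`,
`‖B⁻¹v − S̄_r(B)v‖_s ≤ C̄₀ e^{−(2−(s−t'))a̲√r/2} ‖v‖_{t'}`. -/
theorem thresholded_approximate_inverse_error
    (d : ℕ) (hd : 0 < d) (lam : Fin d → ℕ → ℝ)
    (hpos : ∀ j n, 0 < lam j n) (hmono : ∀ j, Monotone (lam j))
    (htend : ∀ j, Tendsto (lam j) atTop atTop)
    (aLow : ℝ) (haLow0 : 0 < aLow) (haLow : aLow < Real.pi)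
    (t' s : ℝ) (hts : t' ≤ s) (hst : s < t' + 2) :
    ∃ C : ℝ, 0 < C ∧
      ∀ r : ℕ, 1 ≤ r → ∀ ω a : Fin r → ℝ,
        (∀ k, 0 ≤ ω k) → (∀ k, 0 < a k) →
        (∀ k, 0 < ω k → 8 * Real.exp (-Real.pi * Real.sqrt r) ≤ a k) →
        (∀ x : ℝ, lamMin d lam ≤ x →
          |1 / x - ∑ k, ω k * Real.exp (-(a k) * x)|
            ≤ (16 / lamMin d lam + 8 * r * Real.exp 1) * Real.exp (-Real.pi * Real.sqrt r)) →
        (∀ x : ℝ, (1 / 8) * Real.exp (Real.pi * Real.sqrt r) ≤ x →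
          ∑ k, ω k * Real.exp (-(a k) * x) ≤ 1 / x) →
        ∀ v : (Fin d → ℕ) → ℝ,
          hnorm d lam s (fun ν =>
              v ν / lamNu d lam ν - (∑ k, ω k * Real.exp (-(a k) * lamNu d lam ν)) * v ν)
            ≤ ENNReal.ofReal (C * Real.exp (-(2 - (s - t')) * aLow * Real.sqrt r / 2)) *
                hnorm d lam t' v :=
  thresholded_approximate_inverse_error_general d hd lam hpos hmono aLow haLow t' s hts hst
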